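/- arXiv:1002.4754 — 2 statements merged into one kernel-verified Lean document; each statement's English description precedes it below -/
import Mathlib

section
/- Let Γ be a p×p matrix satisfying the decay condition |Γ_{ij}| ≤ M/(1 + |i−j|^{α+1}) with M > 0 and α > 0. Then the banded matrix B_b[Γ] with banding parameter b ≥ 1 satisfies ‖B_b[Γ] − Γ‖∞ ≤ (2M/α) b^{−α}. -/
/-!
Outside the band only the entries with `|i - j| > b` survive, and the decay condition bounds each
of them by `M |i - j|^(-α-1)`. In a row every distance `k` occurs at most twice, so the row sum
is at most `2 M ∑_{k > b} k^(-α-1)`, and comparing this tail with `∫_b^∞ x^(-α-1) dx` bounds it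
by `b^(-α) / α`.
-/

open Finset

theorem sum_comp_le_mul_sum_of_card_fiber_le {ι κ R : Type*} [DecidableEq κ] [CommSemiring R]
    [PartialOrder R] [IsOrderedRing R] {s : Finset ι} {t : Finset κ} {d : ι → κ} {g : κ → R}
    {m : ℕ} (hd : ∀ j ∈ s, d j ∈ t) (hg : ∀ k ∈ t, 0 ≤ g k)
    (hfiber : ∀ k ∈ t, #{j ∈ s | d j = k} ≤ m) :
    ∑ j ∈ s, g (d j) ≤ m * ∑ k ∈ t, g k := by
  rw [← sum_fiberwise_of_maps_to' hd, mul_sum]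
  refine sum_le_sum fun k hk => ?_
  rw [sum_const, nsmul_eq_mul]
  exact mul_le_mul_of_nonneg_right (Nat.mono_cast (hfiber k hk)) (hg k hk)

theorem card_filter_natAbs_sub_eq_le_two {p : ℕ} (s : Finset (Fin p)) (i : Fin p) (k : ℕ) :
    #{j ∈ s | (((i : ℕ) : ℤ) - (j.val : ℤ)).natAbs = k} ≤ 2 := by
  refine (card_le_card_of_injOn (fun j : Fin p => ((j : ℕ) : ℤ))
    (t := {((i : ℕ) : ℤ) - k, ((i : ℕ) : ℤ) + k})
    (fun j hj => ?_) (fun j _ j' _ h => Fin.ext (by simpa using h))).trans card_le_two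
  have := (mem_filter.1 hj).2
  simp only [coe_insert, coe_singleton, Set.mem_insert_iff, Set.mem_singleton_iff]
  omega

theorem sum_far_natAbs_sub_le_two_mul_sum_Ioc {p : ℕ} (i : Fin p) (b : ℕ) {f : ℕ → ℝ}
    (hf : ∀ k ∈ Ioc b p, 0 ≤ f k) :
    ∑ j : Fin p with b < (((i : ℕ) : ℤ) - (j.val : ℤ)).natAbs,
        f (((i : ℕ) : ℤ) - (j.val : ℤ)).natAbs ≤ 2 * ∑ k ∈ Ioc b p, f k := by
  have hmaps : ∀ j ∈ ({j | b < (((i : ℕ) : ℤ) - (j.val : ℤ)).natAbs} : Finset (Fin p)),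
      (((i : ℕ) : ℤ) - (j.val : ℤ)).natAbs ∈ Ioc b p := fun j hj => by
    have := (mem_filter.1 hj).2
    rw [mem_Ioc]
    omega
  simpa only [Nat.cast_ofNat] using sum_comp_le_mul_sum_of_card_fiber_le hmaps hf
    (fun k _ => card_filter_natAbs_sub_eq_le_two _ i k)

theorem div_one_add_rpow_le_mul_rpow_neg {M x : ℝ} (hM : 0 ≤ M) (hx : 0 < x) (s : ℝ) :
    M / (1 + x ^ s) ≤ M * x ^ (-s) := by
  rw [Real.rpow_neg hx.le, ← div_eq_mul_inv]
  have := Real.rpow_pos_of_pos hx s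
  gcongr
  linarith

theorem sum_Ioc_rpow_neg_succ_le {α : ℝ} (hα : 0 < α) {b : ℕ} (hb : 0 < b) (N : ℕ) :
    ∑ k ∈ Ioc b N, (k : ℝ) ^ (-(α + 1)) ≤ (b : ℝ) ^ (-α) / α := by
  rcases lt_or_ge N b with hNb | hbN
  · rw [Ioc_eq_empty_of_le hNb.le, sum_empty]
    positivity
  have hb' : (0 : ℝ) < b := by exact_mod_cast hb
  have hanti : AntitoneOn (fun x : ℝ => x ^ (-(α + 1))) (Set.Icc (b : ℝ) N) :=
    fun x hx y _ hxy => Real.rpow_le_rpow_of_nonpos (hb'.trans_le hx.1) hxy (by linarith)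
  have hint : ∫ x in (b : ℝ)..N, x ^ (-(α + 1)) = ((b : ℝ) ^ (-α) - (N : ℝ) ^ (-α)) / α := by
    rw [integral_rpow (Or.inr ⟨by linarith, ?_⟩)]
    · rw [show -(α + 1) + 1 = -α by ring, div_neg, ← neg_div, neg_sub]
    · exact Set.notMem_uIcc_of_lt hb' (hb'.trans_le (by exact_mod_cast hbN))
  calc ∑ k ∈ Ioc b N, (k : ℝ) ^ (-(α + 1))
      = ∑ i ∈ Ico b N, ((i + 1 : ℕ) : ℝ) ^ (-(α + 1)) := by
        rw [← Ico_add_one_add_one_eq_Ioc, ← sum_Ico_add']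
    _ ≤ ((b : ℝ) ^ (-α) - (N : ℝ) ^ (-α)) / α :=
        hint ▸ hanti.sum_le_integral_Ico hbN
    _ ≤ (b : ℝ) ^ (-α) / α := by gcongr; simp only [sub_le_self_iff]; positivity

/-- Banding bias bound: under the decay condition, the banded matrix `B_b[Γ]`
satisfies `‖B_b[Γ] − Γ‖∞ ≤ (2M/α) b^{−α}` (max absolute row sum norm). -/
theorem stmt4 (p : ℕ) (Γ : Matrix (Fin p) (Fin p) ℝ) (M α : ℝ)
    (hM : 0 < M) (hα : 0 < α)
    (hdecay : ∀ i j : Fin p, |Γ i j| ≤ M / (1 + |((i : ℕ) : ℝ) - ((j : ℕ) : ℝ)| ^ (α + 1)))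
    (b : ℕ) (hb : 1 ≤ b) :
    ∀ i : Fin p,
      ∑ j : Fin p, |(if |((i : ℕ) : ℤ) - ((j : ℕ) : ℤ)| ≤ (b : ℤ) then Γ i j else 0) - Γ i j|
        ≤ (2 * M / α) * (b : ℝ) ^ (-α) := by
  intro i
  set d : Fin p → ℕ := fun j => (((i : ℕ) : ℤ) - (j : ℕ)).natAbs
  have hband (j : Fin p) : |((i : ℕ) : ℤ) - ((j : ℕ) : ℤ)| ≤ (b : ℤ) ↔ d j ≤ b := by
    rw [Int.abs_eq_natAbs]
    exact Nat.cast_le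
  have hdist (j : Fin p) : |((i : ℕ) : ℝ) - ((j : ℕ) : ℝ)| = (d j : ℝ) := by
    simp only [d, Nat.cast_natAbs, Int.cast_abs]
    push_cast
    rfl
  calc ∑ j : Fin p, |(if |((i : ℕ) : ℤ) - ((j : ℕ) : ℤ)| ≤ (b : ℤ) then Γ i j else 0) - Γ i j|
      = ∑ j with b < d j, |Γ i j| := by
        rw [sum_filter]
        refine sum_congr rfl fun j _ => ?_
        by_cases h : d j ≤ b <;> simp [hband, h]
    _ ≤ ∑ j with b < d j, M * (d j : ℝ) ^ (-(α + 1)) := by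
        refine sum_le_sum fun j hj => ?_
        have hpos : (0 : ℝ) < d j := by
          exact_mod_cast (Nat.zero_le b).trans_lt (mem_filter.1 hj).2
        have := hdecay i j
        rw [hdist] at this
        exact this.trans (div_one_add_rpow_le_mul_rpow_neg hM.le hpos _)
    _ ≤ 2 * ∑ k ∈ Ioc b p, M * (k : ℝ) ^ (-(α + 1)) :=
        sum_far_natAbs_sub_le_two_mul_sum_Ioc i b (f := fun k : ℕ => M * (k : ℝ) ^ (-(α + 1)))
          fun k _ => by positivity
    _ ≤ 2 * (M * ((b : ℝ) ^ (-α) / α)) := by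
        rw [← mul_sum]
        gcongr
        exact sum_Ioc_rpow_neg_succ_le hα hb p
    _ = (2 * M / α) * (b : ℝ) ^ (-α) := by ring
end

section
/- Let A and Γ be p×p matrices and t > 0. Define the thresholded matrix T_t[A] with entries A_{ij}·1(|A_{ij}| ≥ t), and similarly T_t[Γ]. Then ‖T_t[A] − T_t[Γ]‖∞ ≤ max_{i,j}|A_{ij} − Γ_{ij}| · max_i ∑_j 1(|Γ_{ij}| ≥ t) + max_i ∑_j |Γ_{ij}| 1(|Γ_{ij}| < t) + max_{i,j}|A_{ij} − Γ_{ij}| · max_i ∑_j 1(|A_{ij}| ≥ t, |Γ_{ij}| < t) + t · max_i ∑_j 1(|Γ_{ij}| ≥ t). -/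
lemma abs_threshold_sub_threshold_le {a g t E : ℝ} (ht : 0 ≤ t) (hE : |a - g| ≤ E) :
    |(if t ≤ |a| then a else 0) - (if t ≤ |g| then g else 0)| ≤
      (if t ≤ |g| then E else 0) + (if |g| < t then |g| else 0) +
      (if t ≤ |a| ∧ |g| < t then E else 0) + (if t ≤ |g| then t else 0) := by
  have ha : |a| ≤ E + |g| := by linarith [abs_sub_abs_le_abs_sub a g]
  have hg : |g| ≤ E + |a| := by linarith [abs_sub_abs_le_abs_sub g a, abs_sub_comm a g]
  split_ifs <;> simp_all <;> linarith

/-- The four-term decomposition bound for the max row-sum norm of the difference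
of two hard-thresholded matrices, stated with arbitrary upper bounds `E` for the
entrywise difference, `N₁` for the row counts of large `Γ` entries, `S` for row
sums of small `Γ` entries, and `N₂` for the row counts of entries large in `A`
but small in `Γ`. -/
theorem stmt8 (p : ℕ) (A Γ : Matrix (Fin p) (Fin p) ℝ) (t : ℝ) (ht : 0 < t)
    (E N₁ S N₂ : ℝ)
    (hE : ∀ i j : Fin p, |A i j - Γ i j| ≤ E)
    (hN₁ : ∀ i : Fin p, (∑ j : Fin p, if t ≤ |Γ i j| then (1 : ℝ) else 0) ≤ N₁)
    (hS : ∀ i : Fin p, (∑ j : Fin p, if |Γ i j| < t then |Γ i j| else 0) ≤ S)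
    (hN₂ : ∀ i : Fin p,
      (∑ j : Fin p, if t ≤ |A i j| ∧ |Γ i j| < t then (1 : ℝ) else 0) ≤ N₂) :
    ∀ i : Fin p,
      ∑ j : Fin p,
        |(if t ≤ |A i j| then A i j else 0) - (if t ≤ |Γ i j| then Γ i j else 0)|
        ≤ E * N₁ + S + E * N₂ + t * N₁ := by
  intro i
  have hE₀ : 0 ≤ E := (abs_nonneg _).trans (hE i i)
  calc _ ≤ ∑ j : Fin p, ((if t ≤ |Γ i j| then E else 0) +
          (if |Γ i j| < t then |Γ i j| else 0) +
          (if t ≤ |A i j| ∧ |Γ i j| < t then E else 0) +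
          (if t ≤ |Γ i j| then t else 0)) :=
        Finset.sum_le_sum fun j _ => abs_threshold_sub_threshold_le ht.le (hE i j)
    _ = E * (∑ j : Fin p, if t ≤ |Γ i j| then (1 : ℝ) else 0) +
        (∑ j : Fin p, if |Γ i j| < t then |Γ i j| else 0) +
        E * (∑ j : Fin p, if t ≤ |A i j| ∧ |Γ i j| < t then (1 : ℝ) else 0) +
        t * (∑ j : Fin p, if t ≤ |Γ i j| then (1 : ℝ) else 0) := by
        simp only [Finset.sum_add_distrib, Finset.mul_sum, mul_ite, mul_one, mul_zero]
    _ ≤ E * N₁ + S + E * N₂ + t * N₁ := by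
        gcongr
        exacts [hN₁ i, hS i, hN₂ i, hN₁ i]
end
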